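/- Let c > 0 and c' > 0 be constants and let γ = γ_l be any sequence with 0 < γ_l ≤ 1.01 for all l, and assume √(2 k log(p−k)/n) > c + γ + c' for all large l. Then I_c(γ) ≥ J_c(γ) for all large l, and log I_c(γ) = (1 + o(1))·[(c + γ)·√(2 n log p / k) − (c + γ)²·n/(2k) + log(n/(2 p log p))] as l → ∞. -/

import Mathlib

open Filter Topology

/-- `Ic k n p c γ` is the largest integer `I ∈ {1, …, k}` such that
`γ + √(2 k log(k/I)/n) > √(2 k log(p−k)/n) − c`, and `0` if no such `I` exists. -/
noncomputable def Ic (k n p : ℕ) (c γ : ℝ) : ℕ :=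
  sSup {I : ℕ | 1 ≤ I ∧ I ≤ k ∧
    Real.sqrt (2 * k * Real.log ((p : ℝ) - k) / n) - c <
      γ + Real.sqrt (2 * k * Real.log ((k : ℝ) / I) / n)}

/-- `Jc k n p c γ` is the largest integer `J ∈ {1, …, k}` such that
`−γ + √(2 k log(k/J)/n) > √(2 k log(p−k)/n) − c`, and `0` if no such `J` exists. -/
noncomputable def Jc (k n p : ℕ) (c γ : ℝ) : ℕ := Ic k n p c (-γ)

/-!
Once `c + γ` lies below `√(2k log(p−k)/n)`, squaring the defining inequality shows that `I ≥ 1`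
qualifies exactly when `I < x := k·exp(−n(√(2k log(p−k)/n) − c − γ)²/(2k))`, so `Ic = ⌈x⌉ − 1`.
Expanding the square, `log x = log(k/(p−k)) + (c+γ)√(2n log(p−k)/k) − (c+γ)²n/(2k)`. Under the
growth assumptions every term other than `(c+γ)√(2n log p/k)` is `O(log log p)`, while this leading
term is at least `c√(2/c₅)(log p)^0.005` because `k ≤ c₅ n (log p)^0.99`. Hence `log Ic` and the
stated main term are both asymptotically equivalent to the leading term. Finally `Jc ≤ Ic` since
`Ic` is monotone in `γ`.
-/

open Real Asymptotics

theorem Nat.sSup_setOf_one_le_cast_lt (x : ℝ) :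
    sSup {I : ℕ | 1 ≤ I ∧ (I : ℝ) < x} = ⌈x⌉₊ - 1 := by
  have hset : {I : ℕ | 1 ≤ I ∧ (I : ℝ) < x} = Set.Icc 1 (⌈x⌉₊ - 1) := by
    ext I
    simp only [Set.mem_ofPred_eq, Set.mem_Icc, ← Nat.lt_ceil]
    omega
  rcases Nat.lt_or_ge (⌈x⌉₊ - 1) 1 with h | h
  · rw [hset, Set.Icc_eq_empty_of_lt h, csSup_empty]
    exact (Nat.lt_one_iff.mp h).symm
  · rw [hset, csSup_Icc h]

theorem lt_sqrt_two_mul_log_div_iff {K N y r : ℝ} (hK : 0 < K) (hN : 0 < N) (hy : 0 < y)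
    (hr : 0 ≤ r) :
    r < √(2 * K * log (K / y) / N) ↔ y < K * exp (-(N * r ^ 2 / (2 * K))) := by
  have hlog : r ^ 2 * N < 2 * K * log (K / y) ↔ N * r ^ 2 / (2 * K) < log (K / y) := by
    rw [div_lt_iff₀ (by positivity)]
    constructor <;> intro h <;> linarith
  rw [lt_sqrt hr, lt_div_iff₀ hN, hlog, lt_log_iff_exp_lt (div_pos hK hy), lt_div_iff₀ hy,
    exp_neg, ← div_eq_mul_inv, lt_div_iff₀ (exp_pos _), mul_comm]

theorem Real.sqrt_sub_sqrt_le_sqrt_sub {a b : ℝ} (hb : 0 ≤ b) (hba : b ≤ a) :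
    √a - √b ≤ √(a - b) := by
  rw [sub_le_iff_le_add, sqrt_le_left (by positivity)]
  nlinarith [sq_sqrt hb, sq_sqrt (sub_nonneg.2 hba),
    mul_nonneg (sqrt_nonneg (a - b)) (sqrt_nonneg b)]

theorem abs_log_natCeil_sub_one_sub_log_le {x : ℝ} (hx : 2 ≤ x) :
    |log ((⌈x⌉₊ - 1 : ℕ) : ℝ) - log x| ≤ log 2 := by
  have hceil : ((⌈x⌉₊ - 1 : ℕ) : ℝ) = ⌈x⌉₊ - 1 := by
    rw [Nat.cast_sub (Nat.ceil_pos.2 (by linarith)), Nat.cast_one]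
  have hlt : ((⌈x⌉₊ - 1 : ℕ) : ℝ) < x := by linarith [Nat.ceil_lt_add_one (by linarith : 0 ≤ x)]
  have hge : x / 2 ≤ ((⌈x⌉₊ - 1 : ℕ) : ℝ) := by linarith [Nat.le_ceil x]
  have hpos : 0 < x / 2 := by linarith
  rw [abs_le]
  constructor
  · have := log_le_log hpos hge
    rw [log_div (by linarith) two_ne_zero] at this
    linarith
  · linarith [log_le_log (hpos.trans_le hge) hlt.le, log_nonneg one_le_two]

theorem log_sub_log_mem_of_le {m P L a b d : ℝ} (ha : 0 < a) (hP : 0 < P) (hL : 0 < L) (hd : 0 < d)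
    (hlow : a * P / L ^ b ≤ m) (hup : d * m ≤ P) :
    log m - log P ∈ Set.Icc (log a - b * log L) (-log d) := by
  have hm : 0 < m := lt_of_lt_of_le (by positivity) hlow
  constructor
  · have := log_le_log (by positivity) hlow
    rw [log_div (by positivity) (by positivity), log_mul ha.ne' hP.ne', log_rpow hL] at this
    linarith
  · have := log_le_log (by positivity) hup
    rw [log_mul hd.ne' hm.ne'] at this
    linarith

theorem log_sub_log_sub_mem {P K : ℝ} (hP : 0 < P) (hK : 0 ≤ K) (hKP : K ≤ 0.99 * P) :
    log P - log (P - K) ∈ Set.Icc 0 (log 100) := by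
  have hPK : 0 < P - K := by linarith
  constructor
  · linarith [log_le_log hPK (by linarith : P - K ≤ P)]
  · have := log_le_log (by linarith) (by linarith : P ≤ 100 * (P - K))
    rw [log_mul (by norm_num) hPK.ne'] at this
    linarith

theorem sq_mul_div_le {b B N K d : ℝ} (hb : 0 ≤ b) (hbB : b ≤ B) (hd : 0 < d) (hN : 0 < N)
    (hNK : d * N ≤ K) : b ^ 2 * N / (2 * K) ≤ B ^ 2 / (2 * d) := by
  rw [div_le_div_iff₀ (by nlinarith) (by positivity)]
  nlinarith [mul_le_mul (pow_le_pow_left₀ hb hbB 2) hNK (by positivity) (by positivity)]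

theorem mul_sqrt_le_mul_sqrt_rpow {c γ c₅ N K L : ℝ} (hc : 0 ≤ c) (hγ : 0 ≤ γ) (hc₅ : 0 < c₅)
    (hK : 0 < K) (hL : 0 < L) (hKN : K ≤ c₅ * N * L ^ (0.99 : ℝ)) :
    c * √(2 / c₅) * L ^ (0.005 : ℝ) ≤ (c + γ) * √(2 * N * L / K) := by
  have hsqrt : √(2 / c₅) * L ^ (0.005 : ℝ) = √(2 / c₅ * L ^ (0.01 : ℝ)) := by
    rw [sqrt_mul (by positivity), sqrt_eq_rpow (L ^ _), ← rpow_mul hL.le]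
    norm_num
  have hle : 2 / c₅ * L ^ (0.01 : ℝ) ≤ 2 * N * L / K := by
    rw [le_div_iff₀ hK]
    calc 2 / c₅ * L ^ (0.01 : ℝ) * K ≤ 2 / c₅ * L ^ (0.01 : ℝ) * (c₅ * N * L ^ (0.99 : ℝ)) := by
          gcongr
      _ = 2 * N * L := by
          rw [show 2 / c₅ * L ^ (0.01 : ℝ) * (c₅ * N * L ^ (0.99 : ℝ))
              = 2 * N * L ^ ((0.01 : ℝ) + 0.99) by rw [rpow_add hL]; field_simp]
          norm_num
  rw [mul_assoc, hsqrt]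
  exact mul_le_mul (by linarith) (sqrt_le_sqrt hle) (sqrt_nonneg _) (by linarith)

theorem Asymptotics.isBigO_of_affine_bounds {ι : Type*} {l : Filter ι} {f g : ι → ℝ}
    (hg : Tendsto g l atTop) {a₁ b₁ a₂ b₂ : ℝ}
    (h : ∀ᶠ i in l, a₁ + b₁ * g i ≤ f i ∧ f i ≤ a₂ + b₂ * g i) : f =O[l] g := by
  refine IsBigO.of_bound (|a₁| + |b₁| + |a₂| + |b₂|) ?_
  filter_upwards [h, hg.eventually_ge_atTop 1] with i ⟨hlo, hup⟩ hgi
  have hg0 : 0 ≤ g i := by linarith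
  rw [Real.norm_eq_abs, Real.norm_eq_abs, abs_of_nonneg hg0, abs_le]
  have h₁ := mul_le_mul_of_nonneg_right (neg_abs_le b₁) hg0
  have h₂ := mul_le_mul_of_nonneg_right (le_abs_self b₂) hg0
  have h₃ := mul_le_mul_of_nonneg_left hgi (abs_nonneg a₁)
  have h₄ := mul_le_mul_of_nonneg_left hgi (abs_nonneg a₂)
  have h₅ := mul_nonneg (abs_nonneg b₁) hg0
  have h₆ := mul_nonneg (abs_nonneg b₂) hg0
  constructor <;> linarith [neg_abs_le a₁, le_abs_self a₂, abs_nonneg a₁, abs_nonneg a₂]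

theorem isBigO_log_natCeil_sub_one_sub_log {ι : Type*} {l : Filter ι} {f g : ι → ℝ}
    (hf : ∀ᶠ i in l, 2 ≤ f i) (hg : Tendsto g l atTop) :
    (fun i => log ((⌈f i⌉₊ - 1 : ℕ) : ℝ) - log (f i)) =O[l] g := by
  refine isBigO_of_affine_bounds hg (a₁ := -log 2) (b₁ := 0) (a₂ := log 2) (b₂ := 0) ?_
  filter_upwards [hf] with i hi
  have := abs_le.1 (abs_log_natCeil_sub_one_sub_log_le hi)
  constructor <;> linarith

theorem Ic_monotone (k n p : ℕ) (c : ℝ) : Monotone (Ic k n p c) := by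
  intro γ₁ γ₂ hγ
  refine csSup_le_csSup' ⟨k, fun I hI => hI.2.1⟩ fun I hI => ⟨hI.1, hI.2.1, ?_⟩
  linarith [hI.2.2]

noncomputable def icThreshold (K N P c γ : ℝ) : ℝ :=
  K * exp (-(N * (√(2 * K * log (P - K) / N) - c - γ) ^ 2 / (2 * K)))

theorem Ic_eq_ceil_icThreshold_sub_one {k n p : ℕ} {c γ : ℝ} (hk : 0 < k) (hn : 0 < n)
    (hγ : c + γ ≤ √(2 * k * log ((p : ℝ) - k) / n)) :
    Ic k n p c γ = ⌈icThreshold k n p c γ⌉₊ - 1 := by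
  have hk' : (0 : ℝ) < k := by exact_mod_cast hk
  have hle : icThreshold k n p c γ ≤ k :=
    mul_le_of_le_one_right hk'.le (exp_le_one_iff.2 (neg_nonpos.2 (by positivity)))
  have key (I : ℕ) (hI : 1 ≤ I) :
      √(2 * k * log ((p : ℝ) - k) / n) - c < γ + √(2 * k * log ((k : ℝ) / I) / n) ↔
        (I : ℝ) < icThreshold k n p c γ := by
    rw [← sub_lt_iff_lt_add', icThreshold, ← lt_sqrt_two_mul_log_div_iff hk'
      (by exact_mod_cast hn) (by exact_mod_cast hI) (by linarith)]
  rw [Ic, ← Nat.sSup_setOf_one_le_cast_lt]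
  congr 1
  ext I
  simp only [Set.mem_ofPred_eq]
  constructor
  · rintro ⟨hI, -, h⟩
    exact ⟨hI, (key I hI).1 h⟩
  · rintro ⟨hI, h⟩
    exact ⟨hI, by exact_mod_cast (h.trans_le hle).le, (key I hI).2 h⟩

theorem log_icThreshold {K N P c γ : ℝ} (hK : 0 < K) (hN : 0 < N) (hPK : 0 ≤ log (P - K)) :
    log (icThreshold K N P c γ) = log K - log (P - K)
      + (c + γ) * √(2 * N * log (P - K) / K) - (c + γ) ^ 2 * N / (2 * K) := by
  have hA2 : N * √(2 * K * log (P - K) / N) ^ 2 = 2 * K * log (P - K) := by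
    rw [sq_sqrt (by positivity)]
    field_simp
  have hA : √(2 * N * log (P - K) / K) = N / K * √(2 * K * log (P - K) / N) := by
    rw [show 2 * N * log (P - K) / K = (N / K) ^ 2 * (2 * K * log (P - K) / N) by
      field_simp, sqrt_mul (by positivity), sqrt_sq (by positivity)]
  rw [icThreshold, log_mul hK.ne' (exp_pos _).ne', log_exp, hA]
  field_simp
  linear_combination -hA2

noncomputable def leadingTerm (K N P c γ : ℝ) : ℝ := (c + γ) * √(2 * N * log P / K)

noncomputable def mainTerm (K N P c γ : ℝ) : ℝ :=
  leadingTerm K N P c γ - (c + γ) ^ 2 * N / (2 * K) + log (N / (2 * P * log P))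

section Estimates

variable {ι : Type*} {l : Filter ι} {K N P γ : ι → ℝ} {c c₁ c₂ c₄ c₅ : ℝ}

theorem isBigO_mainTerm_sub_leadingTerm (hP : Tendsto P l atTop) (hc₁ : 0 < c₁) (hc₄ : 0 < c₄)
    (hNP : ∀ᶠ i in l, c₁ * P i / log (P i) ^ c₂ ≤ N i) (hNK : ∀ᶠ i in l, c₄ * N i ≤ K i)
    (hKP : ∀ᶠ i in l, K i ≤ P i) (hγ : ∀ᶠ i in l, 0 ≤ c + γ i ∧ γ i ≤ 1.01) :
    (fun i => mainTerm (K i) (N i) (P i) c (γ i) - leadingTerm (K i) (N i) (P i) c (γ i))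
      =O[l] fun i => log (log (P i)) := by
  refine isBigO_of_affine_bounds (tendsto_log_atTop.comp (tendsto_log_atTop.comp hP))
    (a₁ := log (c₁ / 2) - (c + 1.01) ^ 2 / (2 * c₄)) (b₁ := -(c₂ + 1))
    (a₂ := -log (2 * c₄)) (b₂ := -1) ?_
  filter_upwards [hNP, hNK, hKP, hγ, hP.eventually_gt_atTop 1] with i hNP hNK hKP hγ hP1
  have hL : 0 < log (P i) := log_pos hP1
  obtain ⟨hlo, hup⟩ := log_sub_log_mem_of_le hc₁ (by linarith) hL hc₄ hNP (hNK.trans hKP)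
  have hN : 0 < N i := lt_of_lt_of_le (by positivity) hNP
  have hK : 0 < K i := (mul_pos hc₄ hN).trans_le hNK
  have hsq := sq_mul_div_le hγ.1 (show c + γ i ≤ c + 1.01 by linarith) hc₄ hN hNK
  have hsq₀ : 0 ≤ (c + γ i) ^ 2 * N i / (2 * K i) := by positivity
  have hsplit : mainTerm (K i) (N i) (P i) c (γ i) - leadingTerm (K i) (N i) (P i) c (γ i)
      = -((c + γ i) ^ 2 * N i / (2 * K i)) + (log (N i) - log (P i)) - log 2 - log (log (P i)) := by
    rw [mainTerm, log_div hN.ne' (by positivity), log_mul (by positivity) hL.ne',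
      log_mul two_ne_zero (by positivity)]
    ring
  rw [hsplit, log_div hc₁.ne' two_ne_zero, log_mul two_ne_zero hc₄.ne']
  constructor <;> linarith

theorem isBigO_log_icThreshold_sub_leadingTerm (hP : Tendsto P l atTop) (hc₁ : 0 < c₁)
    (hc₄ : 0 < c₄) (hNP : ∀ᶠ i in l, c₁ * P i / log (P i) ^ c₂ ≤ N i)
    (hNK : ∀ᶠ i in l, c₄ * N i ≤ K i) (hKP : ∀ᶠ i in l, K i ≤ 0.99 * P i)
    (hγ : ∀ᶠ i in l, 0 ≤ c + γ i ∧ γ i ≤ 1.01) :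
    (fun i => log (icThreshold (K i) (N i) (P i) c (γ i)) - leadingTerm (K i) (N i) (P i) c (γ i))
      =O[l] fun i => log (log (P i)) := by
  refine isBigO_of_affine_bounds (tendsto_log_atTop.comp (tendsto_log_atTop.comp hP))
    (a₁ := log (c₁ * c₄) - (c + 1.01) * √(2 / c₄ * log 100) - (c + 1.01) ^ 2 / (2 * c₄))
    (b₁ := -c₂) (a₂ := log 100) (b₂ := 0) ?_
  filter_upwards [hNP, hNK, hKP, hγ, hP.eventually_ge_atTop 100] with i hNP hNK hKP hγ hP100
  have hL : 0 < log (P i) := log_pos (by linarith)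
  have hN : 0 < N i := lt_of_lt_of_le (by positivity) hNP
  have hK : 0 < K i := (mul_pos hc₄ hN).trans_le hNK
  have hPK : 0 ≤ log (P i - K i) := log_nonneg (by linarith)
  have hKP' : c₁ * c₄ * P i / log (P i) ^ c₂ ≤ K i := by
    rw [show c₁ * c₄ * P i / log (P i) ^ c₂ = c₄ * (c₁ * P i / log (P i) ^ c₂) by ring]
    exact (mul_le_mul_of_nonneg_left hNP hc₄.le).trans hNK
  obtain ⟨hKlo, hKup⟩ := log_sub_log_mem_of_le (mul_pos hc₁ hc₄) (by linarith) hL one_pos hKP'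
    (by linarith)
  obtain ⟨hPKlo, hPKup⟩ := log_sub_log_sub_mem (by linarith) hK.le hKP
  have hD : √(2 * N i * log (P i) / K i) - √(2 * N i * log (P i - K i) / K i)
      ≤ √(2 / c₄ * log 100) := by
    have hNK' : 2 * N i / K i ≤ 2 / c₄ := by
      rw [div_le_div_iff₀ hK hc₄]
      linarith
    calc _ ≤ √(2 * N i * log (P i) / K i - 2 * N i * log (P i - K i) / K i) :=
          sqrt_sub_sqrt_le_sqrt_sub (by positivity) (by gcongr <;> linarith)
      _ = √(2 * N i / K i * (log (P i) - log (P i - K i))) := by ring_nf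
      _ ≤ √(2 / c₄ * log 100) := sqrt_le_sqrt (mul_le_mul hNK' hPKup hPKlo (by positivity))
  have hD₀ : 0 ≤ √(2 * N i * log (P i) / K i) - √(2 * N i * log (P i - K i) / K i) :=
    sub_nonneg.2 (sqrt_le_sqrt (by gcongr <;> linarith))
  have hcD := mul_le_mul (show c + γ i ≤ c + 1.01 by linarith) hD hD₀ (by linarith)
  have hsq := sq_mul_div_le hγ.1 (show c + γ i ≤ c + 1.01 by linarith) hc₄ hN hNK
  have hsq₀ : 0 ≤ (c + γ i) ^ 2 * N i / (2 * K i) := by positivity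
  rw [log_one, neg_zero] at hKup
  rw [log_icThreshold hK hN hPK, leadingTerm]
  constructor <;> linarith [mul_nonneg hγ.1 hD₀]

theorem eventually_mul_rpow_le_leadingTerm (hP : Tendsto P l atTop) (hc : 0 < c) (hc₅ : 0 < c₅)
    (hK : ∀ᶠ i in l, 0 < K i) (hKN : ∀ᶠ i in l, K i ≤ c₅ * N i * log (P i) ^ (0.99 : ℝ))
    (hγ : ∀ᶠ i in l, 0 ≤ γ i) :
    ∀ᶠ i in l, c * √(2 / c₅) * log (P i) ^ (0.005 : ℝ) ≤ leadingTerm (K i) (N i) (P i) c (γ i) := by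
  filter_upwards [hK, hKN, hγ, hP.eventually_gt_atTop 1] with i hK hKN hγ hP1
  exact mul_sqrt_le_mul_sqrt_rpow hc.le hγ hc₅ hK (log_pos hP1) hKN

theorem tendsto_leadingTerm_atTop (hP : Tendsto P l atTop) (hc : 0 < c) (hc₅ : 0 < c₅)
    (hK : ∀ᶠ i in l, 0 < K i) (hKN : ∀ᶠ i in l, K i ≤ c₅ * N i * log (P i) ^ (0.99 : ℝ))
    (hγ : ∀ᶠ i in l, 0 ≤ γ i) :
    Tendsto (fun i => leadingTerm (K i) (N i) (P i) c (γ i)) l atTop :=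
  tendsto_atTop_mono' l (eventually_mul_rpow_le_leadingTerm hP hc hc₅ hK hKN hγ)
    (((tendsto_rpow_atTop (by norm_num)).comp (tendsto_log_atTop.comp hP)).const_mul_atTop
      (by positivity))

theorem isLittleO_log_log_leadingTerm (hP : Tendsto P l atTop) (hc : 0 < c) (hc₅ : 0 < c₅)
    (hK : ∀ᶠ i in l, 0 < K i) (hKN : ∀ᶠ i in l, K i ≤ c₅ * N i * log (P i) ^ (0.99 : ℝ))
    (hγ : ∀ᶠ i in l, 0 ≤ γ i) :
    (fun i => log (log (P i))) =o[l] fun i => leadingTerm (K i) (N i) (P i) c (γ i) := by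
  have hC : 0 < c * √(2 / c₅) := by positivity
  refine ((isLittleO_log_rpow_atTop (by norm_num : (0 : ℝ) < 0.005)).comp_tendsto
    (tendsto_log_atTop.comp hP)).trans_isBigO (IsBigO.of_bound (c * √(2 / c₅))⁻¹ ?_)
  filter_upwards [eventually_mul_rpow_le_leadingTerm hP hc hc₅ hK hKN hγ,
    hP.eventually_gt_atTop 1] with i hi hP1
  have hpos : 0 ≤ log (P i) ^ (0.005 : ℝ) := rpow_nonneg (log_nonneg hP1.le) _
  show ‖log (P i) ^ (0.005 : ℝ)‖ ≤ _
  rw [Real.norm_of_nonneg hpos,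
    Real.norm_of_nonneg (le_trans (by positivity) hi), ← div_eq_inv_mul, le_div_iff₀ hC]
  linarith

end Estimates

theorem isEquivalent_log_Ic_mainTerm {k n p : ℕ → ℕ} {γ : ℕ → ℝ} {c c₁ c₂ c₄ c₅ : ℝ}
    (hk : Tendsto k atTop atTop) (hn : Tendsto n atTop atTop) (hp : Tendsto p atTop atTop)
    (hc : 0 < c) (hc₁ : 0 < c₁) (hc₄ : 0 < c₄) (hc₅ : 0 < c₅)
    (hnp : ∀ l, c₁ * p l / log (p l) ^ c₂ ≤ (n l : ℝ)) (hkn : ∀ l, c₄ * n l ≤ (k l : ℝ))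
    (hkp : ∀ l, (k l : ℝ) ≤ 0.99 * p l) (hkL : ∀ l, (k l : ℝ) ≤ c₅ * n l * log (p l) ^ (0.99 : ℝ))
    (hγ : ∀ l, 0 < γ l ∧ γ l ≤ 1.01)
    (hsep : ∀ᶠ l in atTop, c + γ l ≤ √(2 * k l * log ((p l : ℝ) - k l) / n l)) :
    (fun l => log (Ic (k l) (n l) (p l) c (γ l))) ~[atTop]
      fun l => mainTerm (k l) (n l) (p l) c (γ l) := by
  have hP : Tendsto (fun l => (p l : ℝ)) atTop atTop := tendsto_natCast_atTop_atTop.comp hp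
  have hK : ∀ᶠ l in atTop, (0 : ℝ) < k l :=
    (hk.eventually_gt_atTop 0).mono fun l h => by exact_mod_cast h
  have hγ₀ : ∀ᶠ l in atTop, 0 ≤ γ l := .of_forall fun l => (hγ l).1.le
  have hγ' : ∀ᶠ l in atTop, 0 ≤ c + γ l ∧ γ l ≤ 1.01 :=
    .of_forall fun l => ⟨by linarith [(hγ l).1], (hγ l).2⟩
  have hkP : ∀ l, (k l : ℝ) ≤ p l := fun l => by linarith [hkp l, (p l).cast_nonneg (α := ℝ)]
  have hℓS := isLittleO_log_log_leadingTerm hP hc hc₅ hK (.of_forall hkL) hγ₀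
  have hRS := isBigO_mainTerm_sub_leadingTerm hP hc₁ hc₄ (.of_forall hnp) (.of_forall hkn)
    (.of_forall hkP) hγ'
  have hxS := isBigO_log_icThreshold_sub_leadingTerm hP hc₁ hc₄ (.of_forall hnp)
    (.of_forall hkn) (.of_forall hkp) hγ'
  have hx : Tendsto (fun l => log (icThreshold (k l) (n l) (p l) c (γ l))) atTop atTop :=
    (hxS.trans_isLittleO hℓS).isEquivalent.symm.tendsto_atTop
      (tendsto_leadingTerm_atTop hP hc hc₅ hK (.of_forall hkL) hγ₀)
  have hx₂ : ∀ᶠ l in atTop, 2 ≤ icThreshold (k l) (n l) (p l) c (γ l) := by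
    filter_upwards [hx.eventually_ge_atTop (log 2), hK] with l hl hkl
    exact (log_le_log_iff two_pos (by unfold icThreshold; positivity)).1 hl
  have hIx : (fun l => log (Ic (k l) (n l) (p l) c (γ l))
      - log (icThreshold (k l) (n l) (p l) c (γ l))) =O[atTop] fun l => log (log (p l : ℝ)) :=
    (isBigO_log_natCeil_sub_one_sub_log hx₂
      (tendsto_log_atTop.comp (tendsto_log_atTop.comp hP))).congr' (by
      filter_upwards [hk.eventually_gt_atTop 0, hn.eventually_gt_atTop 0, hsep] with l hkl hnl hl
      rw [Ic_eq_ceil_icThreshold_sub_one hkl hnl hl]) EventuallyEq.rfl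
  have hIS : (fun l => log (Ic (k l) (n l) (p l) c (γ l))) ~[atTop]
      fun l => leadingTerm (k l) (n l) (p l) c (γ l) :=
    (((hIx.add hxS).trans_isLittleO hℓS).congr_left fun l => by simp).isEquivalent
  exact hIS.trans (hRS.trans_isLittleO hℓS).isEquivalent.symm

theorem Ic_asymptotics_general
    (k n p : ℕ → ℕ)
    (hk : Tendsto k atTop atTop) (hn : Tendsto n atTop atTop) (hp : Tendsto p atTop atTop)
    (c₁ c₂ c₃ c₄ c₅ : ℝ)
    (hc₁ : 0 < c₁) (hc₄ : 0 < c₄) (hc₅ : 0 < c₅)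
    (hnp : ∀ l, c₁ * p l / (Real.log (p l)) ^ c₂ ≤ (n l : ℝ) ∧ (n l : ℝ) ≤ c₃ * p l)
    (hkn : ∀ l, c₄ * n l ≤ (k l : ℝ) ∧
        (k l : ℝ) ≤ min ((0.99 : ℝ) * p l) (c₅ * n l * (Real.log (p l)) ^ (0.99 : ℝ)))
    (c : ℝ) (hc : 0 < c) (c' : ℝ) (hc' : 0 < c')
    (γ : ℕ → ℝ) (hγ : ∀ l, 0 < γ l ∧ γ l ≤ 1.01)
    (hsep : ∀ᶠ l in atTop,
        c + γ l + c' < Real.sqrt (2 * k l * Real.log ((p l : ℝ) - k l) / n l)) :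
    (∀ᶠ l in atTop, Jc (k l) (n l) (p l) c (γ l) ≤ Ic (k l) (n l) (p l) c (γ l)) ∧
    ∃ e : ℕ → ℝ, Tendsto e atTop (𝓝 0) ∧
      ∀ᶠ l in atTop, Real.log (Ic (k l) (n l) (p l) c (γ l)) =
        (1 + e l) * ((c + γ l) * Real.sqrt (2 * n l * Real.log (p l) / k l)
          - (c + γ l) ^ 2 * n l / (2 * k l) + Real.log (n l / (2 * p l * Real.log (p l)))) := by
  refine ⟨.of_forall fun l => Ic_monotone _ _ _ _ (neg_le_self (hγ l).1.le), ?_⟩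
  obtain ⟨φ, hφ, hφeq⟩ := (isEquivalent_log_Ic_mainTerm hk hn hp hc hc₁ hc₄ hc₅
    (fun l => (hnp l).1) (fun l => (hkn l).1) (fun l => (hkn l).2.trans (min_le_left _ _))
    (fun l => (hkn l).2.trans (min_le_right _ _)) hγ
    (hsep.mono fun l h => by linarith)).exists_eq_mul
  refine ⟨fun l => φ l - 1, by simpa using hφ.sub_const 1, ?_⟩
  filter_upwards [hφeq] with l hl
  simpa [mainTerm, leadingTerm] using hl

theorem Ic_asymptotics
    (k n p : ℕ → ℕ)
    (hk : Tendsto k atTop atTop) (hn : Tendsto n atTop atTop) (hp : Tendsto p atTop atTop)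
    (c₁ c₂ c₃ c₄ c₅ : ℝ)
    (hc₁ : 0 < c₁) (hc₂ : 0 < c₂) (hc₃ : 0 < c₃) (hc₄ : 0 < c₄) (hc₅ : 0 < c₅)
    (hnp : ∀ l, c₁ * p l / (Real.log (p l)) ^ c₂ ≤ (n l : ℝ) ∧ (n l : ℝ) ≤ c₃ * p l)
    (hkn : ∀ l, c₄ * n l ≤ (k l : ℝ) ∧
        (k l : ℝ) ≤ min ((0.99 : ℝ) * p l) (c₅ * n l * (Real.log (p l)) ^ (0.99 : ℝ)))
    (c : ℝ) (hc : 0 < c) (c' : ℝ) (hc' : 0 < c')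
    (γ : ℕ → ℝ) (hγ : ∀ l, 0 < γ l ∧ γ l ≤ 1.01)
    (hsep : ∀ᶠ l in atTop,
        c + γ l + c' < Real.sqrt (2 * k l * Real.log ((p l : ℝ) - k l) / n l)) :
    (∀ᶠ l in atTop, Jc (k l) (n l) (p l) c (γ l) ≤ Ic (k l) (n l) (p l) c (γ l)) ∧
    ∃ e : ℕ → ℝ, Tendsto e atTop (𝓝 0) ∧
      ∀ᶠ l in atTop, Real.log (Ic (k l) (n l) (p l) c (γ l)) =
        (1 + e l) * ((c + γ l) * Real.sqrt (2 * n l * Real.log (p l) / k l)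
          - (c + γ l) ^ 2 * n l / (2 * k l) + Real.log (n l / (2 * p l * Real.log (p l)))) :=
  Ic_asymptotics_general k n p hk hn hp c₁ c₂ c₃ c₄ c₅ hc₁ hc₄ hc₅ hnp hkn c hc c' hc' γ hγ hsep
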